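/- arXiv:2105.01041 — 7 statements merged into one kernel-verified Lean document; each statement's English description precedes it below -/
import Mathlib

section
/- Let k ≥ 3 and let A be a k-th order supersymmetric tensor on ℝ^n that is orthogonally decomposable, i.e., A = Σ_{r=1}^n λ_r v_r∘v_r∘⋯∘v_r (k factors) with λ_r ∈ ℝ and {v_r} orthonormal. If x_0 = Σ_r c_r v_r and x_{t+1} = A x_t^{k-1} (the (k-1)-fold tensor-vector contraction), then for all q ≥ 0, x_q = Σ_{r=1}^n λ_r^{α(q)} c_r^{β(q)} v_r, where α(q) = ((k-1)^q - 1)/(k-2) and β(q) = (k-1)^q. -/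
open Finset

/-! Contracting with an odeco tensor acts diagonally in the basis `v`: the coefficient `a_r` of
`v_r` becomes `λ_r a_r^{k-1}`. Iterating this scalar recursion `q` times multiplies the exponent
of `c_r` by `(k-1)^q` and accumulates the geometric sum `∑_{j<q} (k-1)^j` in the exponent of
`λ_r`, which equals `((k-1)^q - 1)/(k-2)`. -/

theorem mul_pow_geomSum_succ {M : Type*} [CommMonoid M] (l c : M) (m q : ℕ) :
    l * (l ^ (∑ j ∈ range q, m ^ j) * c ^ m ^ q) ^ m
      = l ^ (∑ j ∈ range (q + 1), m ^ j) * c ^ m ^ (q + 1) := by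
  rw [geom_sum_succ, mul_pow, ← pow_mul', ← pow_mul', pow_succ' m q, pow_succ' l, mul_assoc]

theorem Orthonormal.odeco_contraction_sum_smul {ι E : Type*} [Fintype ι] [NormedAddCommGroup E]
    [InnerProductSpace ℝ E] {v : ι → E} (hv : Orthonormal ℝ v) (lam a : ι → ℝ) (p : ℕ) :
    ∑ r, (lam r * inner ℝ (v r) (∑ s, a s • v s) ^ p) • v r = ∑ r, (lam r * a r ^ p) • v r := by
  simp only [hv.inner_right_fintype]

/-- Explicit solution of the odeco multilinear dynamical system
`x_{t+1} = A x_t^{k-1} = ∑ r, λ_r ⟨v_r, x_t⟩^{k-1} v_r`. -/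
theorem stmt0 (n k : ℕ) (hk : 3 ≤ k)
    (lam : Fin n → ℝ) (v : Fin n → EuclideanSpace ℝ (Fin n))
    (hv : Orthonormal ℝ v)
    (c : Fin n → ℝ) (x : ℕ → EuclideanSpace ℝ (Fin n))
    (hx0 : x 0 = ∑ r, c r • v r)
    (hdyn : ∀ t, x (t + 1) = ∑ r, (lam r * (inner ℝ (v r) (x t) : ℝ) ^ (k - 1)) • v r) :
    ∀ q : ℕ,
      x q = ∑ r, (lam r ^ (((k - 1) ^ q - 1) / (k - 2)) * c r ^ ((k - 1) ^ q)) • v r := by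
  have hα (q : ℕ) : ((k - 1) ^ q - 1) / (k - 2) = ∑ j ∈ range q, (k - 1) ^ j := by
    rw [Nat.geomSum_eq (by omega), show k - 1 - 1 = k - 2 by omega]
  intro q
  simp only [hα]
  induction q with
  | zero => simpa using hx0
  | succ q ih =>
    rw [hdyn, ih, hv.odeco_contraction_sum_smul]
    simp only [mul_pow_geomSum_succ]
end

section
/- Let k ≥ 3 and A an odeco k-th order supersymmetric tensor with orthogonal decomposition A = Σ_{r=1}^n λ_r v_r^{∘k}, {v_r} orthonormal, all λ_r ≠ 0. Let x_0 = Σ_r c_r v_r and define the trajectory x_{t+1} = A x_t^{k-1}. If |c_r| · |λ_r|^{1/(k-2)} < 1 for every r = 1,…,n, then ‖x_t‖ → 0 as t → ∞. -/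
/-!
In the orthonormal frame `v` the dynamics decouple into the scalar recurrences
`a ↦ λ a ^ (d + 1)` with `d = k - 2`. Writing `L = |λ| ^ (1 / d)`, one has
`|a (t + 1)| = |a t| * (L * |a t|) ^ d`, so `|a t|` never grows and then shrinks at least
geometrically with ratio `(L * |a 0|) ^ d < 1`.
-/

open Finset Filter Topology

section PowRecurrence

variable {d : ℕ} {lam : ℝ} {a : ℕ → ℝ}

theorem abs_succ_eq_of_pow_rec (hd : d ≠ 0) (ha : ∀ t, a (t + 1) = lam * a t ^ (d + 1))
    (t : ℕ) : |a (t + 1)| = |a t| * (|lam| ^ (d : ℝ)⁻¹ * |a t|) ^ d := by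
  rw [ha, abs_mul, abs_pow, mul_pow, Real.rpow_inv_natCast_pow (abs_nonneg lam) hd]
  ring

theorem abs_le_geometric_of_pow_rec (hd : d ≠ 0) (ha : ∀ t, a (t + 1) = lam * a t ^ (d + 1))
    (h1 : |lam| ^ (d : ℝ)⁻¹ * |a 0| ≤ 1) (t : ℕ) :
    |a t| ≤ ((|lam| ^ (d : ℝ)⁻¹ * |a 0|) ^ d) ^ t * |a 0| := by
  set L := |lam| ^ (d : ℝ)⁻¹
  have hL : 0 ≤ L := by positivity
  have hq : (L * |a 0|) ^ d ≤ 1 := pow_le_one₀ (by positivity) h1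
  induction t with
  | zero => simp
  | succ t ih =>
    have hle : |a t| ≤ |a 0| :=
      ih.trans (mul_le_of_le_one_left (abs_nonneg _) (pow_le_one₀ (by positivity) hq))
    calc |a (t + 1)| = |a t| * (L * |a t|) ^ d := abs_succ_eq_of_pow_rec hd ha t
      _ ≤ |a t| * (L * |a 0|) ^ d := by gcongr
      _ ≤ ((L * |a 0|) ^ d) ^ t * |a 0| * (L * |a 0|) ^ d := by gcongr
      _ = ((L * |a 0|) ^ d) ^ (t + 1) * |a 0| := by ring

theorem tendsto_zero_of_pow_rec (hd : d ≠ 0) (ha : ∀ t, a (t + 1) = lam * a t ^ (d + 1))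
    (h1 : |lam| ^ (d : ℝ)⁻¹ * |a 0| < 1) : Tendsto a atTop (𝓝 0) := by
  have hq : Tendsto (fun t => ((|lam| ^ (d : ℝ)⁻¹ * |a 0|) ^ d) ^ t * |a 0|) atTop (𝓝 0) := by
    simpa using (tendsto_pow_atTop_nhds_zero_of_lt_one (by positivity)
      (pow_lt_one₀ (by positivity) h1 hd)).mul_const |a 0|
  exact squeeze_zero_norm (abs_le_geometric_of_pow_rec hd ha h1.le) hq

end PowRecurrence

theorem stmt1_general (n k : ℕ) (hk : 3 ≤ k)
    (lam : Fin n → ℝ) (v : Fin n → EuclideanSpace ℝ (Fin n))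
    (hv : Orthonormal ℝ v)
    (c : Fin n → ℝ) (x : ℕ → EuclideanSpace ℝ (Fin n))
    (hx0 : x 0 = ∑ r, c r • v r)
    (hdyn : ∀ t, x (t + 1) = ∑ r, (lam r * (inner ℝ (v r) (x t) : ℝ) ^ (k - 1)) • v r)
    (hc : ∀ r, |c r| * |lam r| ^ ((1 : ℝ) / ((k : ℝ) - 2)) < 1) :
    Tendsto (fun t => ‖x t‖) atTop (nhds 0) := by
  set a : Fin n → ℕ → ℝ := fun r t => inner ℝ (v r) (x t)
  have ha0 (r : Fin n) : a r 0 = c r := by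
    simp only [a, hx0]
    exact hv.inner_right_fintype c r
  have hrec (r : Fin n) (t : ℕ) : a r (t + 1) = lam r * a r t ^ (k - 2 + 1) := by
    simp only [a, hdyn t, show k - 2 + 1 = k - 1 by omega]
    exact hv.inner_right_fintype _ r
  have hexp : ((k - 2 : ℕ) : ℝ)⁻¹ = 1 / ((k : ℝ) - 2) := by
    rw [Nat.cast_sub (by omega), one_div, Nat.cast_ofNat]
  have ha (r : Fin n) : Tendsto (a r) atTop (𝓝 0) :=
    tendsto_zero_of_pow_rec (by omega) (hrec r) (by rw [hexp, ha0, mul_comm]; exact hc r)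
  have hx : Tendsto x atTop (𝓝 0) := by
    rw [← tendsto_add_atTop_iff_nat 1]
    convert tendsto_finsetSum univ fun r _ =>
      (((ha r).pow (k - 1)).const_mul (lam r)).smul_const (v r) using 2 with t
    · exact hdyn t
    · simp [zero_pow (show k - 1 ≠ 0 by omega)]
  exact tendsto_norm_zero.comp hx

/-- Asymptotic stability of the odeco multilinear dynamical system:
if `|c_r| |λ_r|^{1/(k-2)} < 1` for all `r`, then `‖x_t‖ → 0`. -/
theorem stmt1 (n k : ℕ) (hk : 3 ≤ k)
    (lam : Fin n → ℝ) (v : Fin n → EuclideanSpace ℝ (Fin n))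
    (hv : Orthonormal ℝ v) (hlam : ∀ r, lam r ≠ 0)
    (c : Fin n → ℝ) (x : ℕ → EuclideanSpace ℝ (Fin n))
    (hx0 : x 0 = ∑ r, c r • v r)
    (hdyn : ∀ t, x (t + 1) = ∑ r, (lam r * (inner ℝ (v r) (x t) : ℝ) ^ (k - 1)) • v r)
    (hc : ∀ r, |c r| * |lam r| ^ ((1 : ℝ) / ((k : ℝ) - 2)) < 1) :
    Tendsto (fun t => ‖x t‖) atTop (nhds 0) :=
  stmt1_general n k hk lam v hv c x hx0 hdyn hc
end

section
/- Let k ≥ 3 and A an odeco k-th order supersymmetric tensor with orthogonal decomposition A = Σ_{r=1}^n λ_r v_r^{∘k}, {v_r} orthonormal. Let x_0 = Σ_r c_r v_r and x_{t+1} = A x_t^{k-1}. If there exists r with |c_r| · |λ_r|^{1/(k-2)} > 1, then ‖x_t‖ → ∞ as t → ∞ (the equilibrium 0 is unstable). -/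
/-!
Along the eigenvector `v_r` the dynamics decouple: the coordinate `a_t = ⟪v_r, x_t⟫` obeys
`a_{t+1} = λ_r a_t^{k-1}`. With `L = |λ_r|^{1/(k-2)}` the rescaled quantity `b_t = L |a_t|` obeys
`b_{t+1} = b_t^{k-1}`, so `b_t = b_0^{(k-1)^t}` tends to infinity as soon as `b_0 > 1`, and
`‖x_t‖ ≥ |a_t|`.
-/

open Finset Filter

theorem tendsto_atTop_of_succ_eq_pow {b : ℕ → ℝ} {m : ℕ} (hm : 2 ≤ m) (hb₀ : 1 < b 0)
    (hb : ∀ t, b (t + 1) = b t ^ m) : Tendsto b atTop atTop := by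
  have hclosed : b = fun t => b 0 ^ m ^ t := by
    funext t
    induction t with
    | zero => simp
    | succ t ih => rw [hb, ih, ← pow_mul, pow_succ]
  rw [hclosed]
  exact (tendsto_pow_atTop_atTop_of_one_lt hb₀).comp (tendsto_pow_atTop_atTop_of_one_lt hm)

theorem mul_abs_succ_eq_pow {a : ℕ → ℝ} {lam L : ℝ} {m : ℕ} (hL : L ^ m = L * |lam|)
    (ha : ∀ t, a (t + 1) = lam * a t ^ m) (t : ℕ) : L * |a (t + 1)| = (L * |a t|) ^ m := by
  rw [ha, abs_mul, abs_pow, mul_pow, hL]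
  ring

theorem Real.rpow_inv_natCast_pow_succ {μ : ℝ} (hμ : 0 ≤ μ) {p : ℕ} (hp : p ≠ 0) :
    (μ ^ (p : ℝ)⁻¹) ^ (p + 1) = μ ^ (p : ℝ)⁻¹ * μ := by
  rw [pow_succ, Real.rpow_inv_natCast_pow hμ hp, mul_comm]

theorem Orthonormal.abs_inner_le_norm {ι E : Type*} [SeminormedAddCommGroup E]
    [InnerProductSpace ℝ E] {v : ι → E} (hv : Orthonormal ℝ v) (i : ι) (y : E) :
    |inner ℝ (v i) y| ≤ ‖y‖ := by
  simpa [hv.1 i] using abs_real_inner_le_norm (v i) y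

/-- Instability of the odeco multilinear dynamical system:
if `|c_r| |λ_r|^{1/(k-2)} > 1` for some `r`, then `‖x_t‖ → ∞`. -/
theorem stmt2 (n k : ℕ) (hk : 3 ≤ k)
    (lam : Fin n → ℝ) (v : Fin n → EuclideanSpace ℝ (Fin n))
    (hv : Orthonormal ℝ v)
    (c : Fin n → ℝ) (x : ℕ → EuclideanSpace ℝ (Fin n))
    (hx0 : x 0 = ∑ r, c r • v r)
    (hdyn : ∀ t, x (t + 1) = ∑ r, (lam r * (inner ℝ (v r) (x t) : ℝ) ^ (k - 1)) • v r)
    (hc : ∃ r, 1 < |c r| * |lam r| ^ ((1 : ℝ) / ((k : ℝ) - 2))) :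
    Tendsto (fun t => ‖x t‖) atTop atTop := by
  obtain ⟨r, hr⟩ := hc
  have hexp : (1 : ℝ) / ((k : ℝ) - 2) = ((k - 2 : ℕ) : ℝ)⁻¹ := by
    rw [one_div, Nat.cast_sub (by omega)]
    norm_num
  set L := |lam r| ^ ((1 : ℝ) / ((k : ℝ) - 2))
  set a : ℕ → ℝ := fun t => inner ℝ (v r) (x t)
  have ha₀ : a 0 = c r := by simpa only [a, hx0] using hv.inner_right_fintype c r
  have ha : ∀ t, a (t + 1) = lam r * a t ^ (k - 1) := fun t => by
    simpa only [a, hdyn t] using hv.inner_right_fintype _ r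
  have hL : L ^ (k - 1) = L * |lam r| := by
    simp only [L, hexp, show k - 1 = k - 2 + 1 by omega]
    exact Real.rpow_inv_natCast_pow_succ (abs_nonneg _) (by omega)
  have hb₀ : 1 < L * |a 0| := by rwa [ha₀, mul_comm]
  have hLpos : 0 < L := pos_of_mul_pos_left (one_pos.trans hb₀) (abs_nonneg _)
  have ha_tendsto : Tendsto (fun t => |a t|) atTop atTop :=
    (tendsto_const_mul_atTop_of_pos hLpos).1 <|
      tendsto_atTop_of_succ_eq_pow (by omega) hb₀ (mul_abs_succ_eq_pow hL ha)
  exact tendsto_atTop_mono (fun t => hv.abs_inner_le_norm r (x t)) ha_tendsto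
end

section
/- Let k ≥ 3, A an odeco k-th order supersymmetric tensor with decomposition A = Σ_r λ_r v_r^{∘k} ({v_r} orthonormal), and let λ = max_r |λ_r|. If x_0 ∈ ℝ^n satisfies λ^{1/(k-2)} ‖x_0‖ < 1, then the trajectory x_{t+1} = A x_t^{k-1} satisfies x_t → 0. -/
open Finset Filter

/-!
Writing `c_r = ⟪v_r, y⟫`, orthonormality and Bessel's inequality give
`‖∑ λ_r c_r^{m+1} v_r‖² = ∑ λ_r² c_r^{2m+2} ≤ Λ² ‖y‖^{2m} ∑ c_r² ≤ (Λ ‖y‖^{m+1})²`,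
so the norms `a_t = ‖x_t‖` satisfy `a_{t+1} ≤ Λ a_t^m · a_t`. As long as `a_t ≤ a_0` this
is a contraction with ratio `q = Λ a_0^m = (Λ^{1/m} a_0)^m < 1`, so `a_t ≤ q^t a_0 → 0`.
-/

theorem Orthonormal.norm_sum_smul_inner_pow_le {ι E : Type*} [Fintype ι] [NormedAddCommGroup E]
    [InnerProductSpace ℝ E] {v : ι → E} (hv : Orthonormal ℝ v) {lam : ι → ℝ} {Λ : ℝ}
    (hΛ : 0 ≤ Λ) (hlam : ∀ r, |lam r| ≤ Λ) (y : E) (m : ℕ) :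
    ‖∑ r, (lam r * inner ℝ (v r) y ^ (m + 1)) • v r‖ ≤ Λ * ‖y‖ ^ (m + 1) := by
  set c : ι → ℝ := fun r => inner ℝ (v r) y
  have hbessel : ∑ r, c r ^ 2 ≤ ‖y‖ ^ 2 := by
    simpa only [Real.norm_eq_abs, sq_abs] using hv.sum_inner_products_le (s := univ) y
  have hc : ∀ r, c r ^ 2 ≤ ‖y‖ ^ 2 := fun r =>
    (single_le_sum (fun s _ => sq_nonneg (c s)) (mem_univ r)).trans hbessel
  have hterm : ∀ r, (lam r * c r ^ (m + 1)) ^ 2 ≤ Λ ^ 2 * (‖y‖ ^ 2) ^ m * c r ^ 2  := by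
    intro r
    calc (lam r * c r ^ (m + 1)) ^ 2 = lam r ^ 2 * (c r ^ 2) ^ m * c r ^ 2 := by ring
      _ ≤ Λ ^ 2 * (‖y‖ ^ 2) ^ m * c r ^ 2 := by
        have hlam_sq : lam r ^ 2 ≤ Λ ^ 2 :=
          sq_le_sq' (neg_le_of_abs_le (hlam r)) (le_of_abs_le (hlam r))
        gcongr ?_ * ?_ * _
        exact pow_le_pow_left₀ (sq_nonneg _) (hc r) m
  have hsq : ‖∑ r, (lam r * c r ^ (m + 1)) • v r‖ ^ 2 ≤ (Λ * ‖y‖ ^ (m + 1)) ^ 2 :=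
    calc ‖∑ r, (lam r * c r ^ (m + 1)) • v r‖ ^ 2
        = ∑ r, (lam r * c r ^ (m + 1)) ^ 2 := by
          rw [← real_inner_self_eq_norm_sq, hv.inner_sum]
          simp only [conj_trivial, sq]
      _ ≤ ∑ r, Λ ^ 2 * (‖y‖ ^ 2) ^ m * c r ^ 2 := sum_le_sum fun r _ => hterm r
      _ = Λ ^ 2 * (‖y‖ ^ 2) ^ m * ∑ r, c r ^ 2 := by rw [mul_sum]
      _ ≤ Λ ^ 2 * (‖y‖ ^ 2) ^ m * ‖y‖ ^ 2 := by gcongr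
      _ = (Λ * ‖y‖ ^ (m + 1)) ^ 2 := by ring
  exact pow_le_pow_iff_left₀ (norm_nonneg _) (by positivity) two_ne_zero |>.mp hsq

section SuperlinearRecursion

variable {a : ℕ → ℝ} {Λ : ℝ} {m : ℕ}

lemma le_geometric_of_le_mul_pow_succ (ha : ∀ t, 0 ≤ a t) (hΛ : 0 ≤ Λ)
    (hstep : ∀ t, a (t + 1) ≤ Λ * a t ^ (m + 1)) (hq : Λ * a 0 ^ m ≤ 1) (t : ℕ) :
    a t ≤ (Λ * a 0 ^ m) ^ t * a 0 := by
  have ha0 := ha 0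
  induction t with
  | zero => simp
  | succ t ih =>
    have hle : a t ≤ a 0 :=
      ih.trans (mul_le_of_le_one_left ha0 (pow_le_one₀ (by positivity) hq))
    calc a (t + 1) ≤ Λ * a t ^ m * a t := by rw [mul_assoc, ← pow_succ]; exact hstep t
      _ ≤ Λ * a 0 ^ m * ((Λ * a 0 ^ m) ^ t * a 0) := by have := ha t; gcongr
      _ = (Λ * a 0 ^ m) ^ (t + 1) * a 0 := by ring

lemma tendsto_zero_of_le_mul_pow_succ (hm : m ≠ 0) (ha : ∀ t, 0 ≤ a t) (hΛ : 0 ≤ Λ)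
    (hstep : ∀ t, a (t + 1) ≤ Λ * a t ^ (m + 1)) (h0 : Λ ^ ((m : ℝ)⁻¹) * a 0 < 1) :
    Tendsto a atTop (nhds 0) := by
  have ha0 := ha 0
  have hq : Λ * a 0 ^ m = (Λ ^ ((m : ℝ)⁻¹) * a 0) ^ m := by
    rw [mul_pow, Real.rpow_inv_natCast_pow hΛ hm]
  have hq0 : 0 ≤ Λ * a 0 ^ m := by positivity
  have hq1 : Λ * a 0 ^ m < 1 := hq ▸ pow_lt_one₀ (by positivity) h0 hm
  have hgeom : Tendsto (fun t => (Λ * a 0 ^ m) ^ t * a 0) atTop (nhds 0) := by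
    simpa using (tendsto_pow_atTop_nhds_zero_of_lt_one hq0 hq1).mul_const (a 0)
  exact squeeze_zero ha (le_geometric_of_le_mul_pow_succ ha hΛ hstep hq1.le) hgeom

end SuperlinearRecursion

/-- If `λ` is the Z-spectral radius (max of `|λ_r|` in the orthogonal decomposition)
and `λ^{1/(k-2)} ‖x_0‖ < 1`, the trajectory converges to `0`. -/
theorem stmt4 (n k : ℕ) (hk : 3 ≤ k)
    (lam : Fin n → ℝ) (v : Fin n → EuclideanSpace ℝ (Fin n))
    (hv : Orthonormal ℝ v)
    (x : ℕ → EuclideanSpace ℝ (Fin n))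
    (hdyn : ∀ t, x (t + 1) = ∑ r, (lam r * (inner ℝ (v r) (x t) : ℝ) ^ (k - 1)) • v r)
    (lam0 : ℝ) (hgr : IsGreatest (Set.range fun r => |lam r|) lam0)
    (hcond : lam0 ^ ((1 : ℝ) / ((k : ℝ) - 2)) * ‖x 0‖ < 1) :
    Tendsto x atTop (nhds 0) := by
  obtain ⟨m, rfl⟩ : ∃ m, k = m + 2 := ⟨k - 2, by omega⟩
  have hlam0 : 0 ≤ lam0 := by
    obtain ⟨r, hr⟩ := hgr.1
    exact hr ▸ abs_nonneg _
  have hlam : ∀ r, |lam r| ≤ lam0 := fun r => hgr.2 ⟨r, rfl⟩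
  rw [tendsto_zero_iff_norm_tendsto_zero]
  refine tendsto_zero_of_le_mul_pow_succ (m := m) (by omega) (fun t => norm_nonneg _) hlam0
    (fun t => ?_) ?_
  · rw [hdyn]
    exact hv.norm_sum_smul_inner_pow_le hlam0 hlam (x t) m
  · convert hcond using 3
    push_cast
    ring
end

section
/- Let A be an even-order (order 2m, m ≥ 1) supersymmetric tensor on ℝ^n, and let ψ(A) ∈ ℝ^{n^m × n^m} be its square unfolding, defined by A_{j_1 i_1 … j_m i_m} = ψ(A)_{j i} with j = j_1 + Σ_{p=2}^m (j_p−1)n^{p−1} and i = i_1 + Σ_{p=2}^m (i_p−1)n^{p−1}. Then every Z-eigenvalue λ of A (i.e., λ ∈ ℝ with A v^{2m−1} = λ v and ‖v‖ = 1 for some v ∈ ℝ^n) satisfies |λ| ≤ ρ(ψ(A)), the spectral radius of ψ(A). -/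
/-!
For a Z-eigenpair `(λ, v)`, `λ = v ⬝ᵥ A v^{2m-1} = A v^{2m}`. Splitting the `2m` indices into two
halves turns `A v^{2m}` into the quadratic form `wᵀ ψ(A) w` of the unfolding at the unit vector
`w = v^{⊗m}`. Supersymmetry makes `ψ(A)` symmetric, so this Rayleigh quotient lies between the least
and the greatest eigenvalue of `ψ(A)`, and `|λ|` is at most the largest eigenvalue modulus.
-/

open Finset

/-- Build a full index from a leading index `i` and the rest `f`. -/
def ins {n k : ℕ} (i : Fin n) (f : Fin (k - 1) → Fin n) : Fin k → Fin n :=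
  fun p => if h : (p : ℕ) = 0 then i else f ⟨(p : ℕ) - 1, by have := p.isLt; omega⟩

/-- The tensor-vector contraction `(A v^{k-1})_i`. -/
noncomputable def tvec {n k : ℕ} (A : (Fin k → Fin n) → ℝ) (v : Fin n → ℝ) : Fin n → ℝ :=
  fun i => ∑ f : Fin (k - 1) → Fin n, A (ins i f) * ∏ p, v (f p)

open Matrix Module.End

theorem LinearMap.IsSymmetric.exists_hasEigenvalue_abs_inner_le {E : Type*}
    [NormedAddCommGroup E] [InnerProductSpace ℝ E] [FiniteDimensional ℝ E]
    {T : E →ₗ[ℝ] E} (hT : T.IsSymmetric) {x : E} (hx : x ≠ 0) :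
    ∃ μ, HasEigenvalue T μ ∧ |inner ℝ (T x) x| ≤ |μ| * ‖x‖ ^ 2 := by
  have : Nontrivial E := ⟨⟨x, 0, hx⟩⟩
  let T' := LinearMap.toContinuousLinearMap T
  let R : {y : E // y ≠ 0} → ℝ := fun y => T'.rayleighQuotient y
  have hRT' (y) : |R y| ≤ ‖T'‖ := T'.rayleighQuotient_le_norm y
  have hsup : HasEigenvalue T (⨆ y, R y) := hT.hasEigenvalue_iSup_of_finiteDimensional
  have hinf : HasEigenvalue T (⨅ y, R y) := hT.hasEigenvalue_iInf_of_finiteDimensional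
  have hRx : inner ℝ (T x) x = R ⟨x, hx⟩ * ‖x‖ ^ 2 := by
    simp [R, T', ContinuousLinearMap.rayleighQuotient, ContinuousLinearMap.reApplyInnerSelf, hx]
  rw [hRx, abs_mul, abs_of_nonneg (sq_nonneg ‖x‖)]
  refine (le_total 0 (R ⟨x, hx⟩)).elim (fun hpos => ⟨_, hsup, ?_⟩) (fun hneg => ⟨_, hinf, ?_⟩)
    <;> refine mul_le_mul_of_nonneg_right ?_ (sq_nonneg _)
  · have hle : R ⟨x, hx⟩ ≤ ⨆ y, R y :=
      le_ciSup ⟨‖T'‖, by rintro _ ⟨y, rfl⟩; exact (abs_le.1 (hRT' y)).2⟩ _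
    rw [abs_of_nonneg hpos]
    exact hle.trans (le_abs_self _)
  · have hle : ⨅ y, R y ≤ R ⟨x, hx⟩ :=
      ciInf_le ⟨-‖T'‖, by rintro _ ⟨y, rfl⟩; exact (abs_le.1 (hRT' y)).1⟩ _
    rw [abs_of_nonpos hneg]
    exact (neg_le_neg hle).trans (neg_le_abs _)

theorem Matrix.IsHermitian.exists_hasEigenvalue_abs_dotProduct_mulVec_le {ι : Type*}
    [Fintype ι] [DecidableEq ι] {M : Matrix ι ι ℝ} (hM : M.IsHermitian) {x : ι → ℝ}
    (hx : x ≠ 0) : ∃ μ, HasEigenvalue (Matrix.toLin' M) μ ∧ |x ⬝ᵥ M *ᵥ x| ≤ |μ| * (x ⬝ᵥ x) := by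
  obtain ⟨μ, hμ, hle⟩ := (isSymmetric_toEuclideanLin_iff.mpr hM).exists_hasEigenvalue_abs_inner_le
    (x := WithLp.toLp 2 x) (by simpa using hx)
  refine ⟨μ, ?_, ?_⟩
  · rw [hasEigenvalue_iff_mem_spectrum, Matrix.spectrum_toLin', ← Matrix.spectrum_toLpLin 2]
    exact hμ.mem_spectrum
  · rw [EuclideanSpace.norm_sq_eq] at hle
    simpa [EuclideanSpace.inner_eq_star_dotProduct, dotProduct_comm, toLpLin_apply, sq, dotProduct]
      using hle

section Unfolding

variable {R : Type*} {n : ℕ}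

def tensorPow [CommSemiring R] (m : ℕ) (v : Fin n → R) : (Fin m → Fin n) → R :=
  fun J => ∏ p, v (J p)

theorem tensorPow_dotProduct_self [CommSemiring R] (m : ℕ) (v : Fin n → R) :
    tensorPow m v ⬝ᵥ tensorPow m v = (v ⬝ᵥ v) ^ m := by
  simp only [dotProduct, tensorPow, ← Finset.prod_mul_distrib]
  exact (Fintype.prod_sum fun _ i => v i * v i).symm.trans (Fin.prod_const m _)

def unfolding {m m' : ℕ} (A : (Fin (m + m') → Fin n) → R) :
    Matrix (Fin m → Fin n) (Fin m' → Fin n) R :=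
  Matrix.of fun J I => A (Fin.append J I)

theorem sum_mul_prod_eq_tensorPow_dotProduct_unfolding_mulVec [CommSemiring R] {m m' : ℕ}
    (A : (Fin (m + m') → Fin n) → R) (v : Fin n → R) :
    ∑ g : Fin (m + m') → Fin n, A g * ∏ q, v (g q) =
      tensorPow m v ⬝ᵥ unfolding A *ᵥ tensorPow m' v := by
  rw [← (Fin.appendEquiv m m').sum_comp, Fintype.sum_prod_type]
  simp only [dotProduct, mulVec, Finset.mul_sum, Fin.appendEquiv, Equiv.coe_fn_mk,
    Fin.prod_univ_add, Fin.append_left, Fin.append_right, unfolding, tensorPow, of_apply]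
  exact Finset.sum_congr rfl fun J _ => Finset.sum_congr rfl fun I _ => by ring

theorem transpose_unfolding {m : ℕ} {A : (Fin (m + m) → Fin n) → R}
    (hA : ∀ (σ : Equiv.Perm (Fin (m + m))) (f : Fin (m + m) → Fin n), A (f ∘ σ) = A f) :
    (unfolding A)ᵀ = unfolding A := by
  ext J I
  have hflip : Fin.append I J ∘ finAddFlip = Fin.append J I := by
    funext q
    induction q using Fin.addCases <;>
      simp only [Function.comp_apply, finAddFlip_apply_castAdd, finAddFlip_apply_natAdd,
        Fin.append_left, Fin.append_right]
  simp only [transpose_apply, unfolding, of_apply, ← hflip, hA]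

end Unfolding

theorem ins_eq_cons {n k : ℕ} (i : Fin n) (f : Fin k → Fin n) :
    ins (k := k + 1) i f = Fin.cons i f := by
  ext p
  induction p using Fin.cases <;> simp [ins]

theorem dotProduct_tvec {n k : ℕ} (hk : 1 ≤ k) (A : (Fin k → Fin n) → ℝ) (v : Fin n → ℝ) :
    v ⬝ᵥ tvec A v = ∑ g : Fin k → Fin n, A g * ∏ q, v (g q) := by
  obtain ⟨k, rfl⟩ : ∃ s, k = s + 1 := ⟨k - 1, by omega⟩
  rw [← (Fin.consEquiv fun _ => Fin n).sum_comp, Fintype.sum_prod_type]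
  simp only [dotProduct, tvec, Finset.mul_sum, ins_eq_cons, Fin.consEquiv, Equiv.coe_fn_mk,
    Fin.prod_univ_succ, Fin.cons_zero, Fin.cons_succ]
  exact Finset.sum_congr rfl fun i _ => Finset.sum_congr rfl fun f _ => mul_left_comm _ _ _

/-- Every Z-eigenvalue of an even-order (order `2m`) supersymmetric tensor is bounded in
absolute value by the spectral radius (the largest absolute value of an eigenvalue)
of its square unfolding `ψ(A)`. -/
theorem stmt8 (n m : ℕ) (hm : 1 ≤ m) (A : (Fin (m + m) → Fin n) → ℝ)
    (hsym : ∀ (σ : Equiv.Perm (Fin (m + m))) (f : Fin (m + m) → Fin n), A (f ∘ σ) = A f)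
    (ψA : Matrix (Fin m → Fin n) (Fin m → Fin n) ℝ)
    (hψ : ∀ J I : Fin m → Fin n, ψA J I = A (Fin.append J I))
    (lam : ℝ) (v : Fin n → ℝ) (hunit : ∑ i, v i ^ 2 = 1)
    (heig : ∀ i, tvec A v i = lam * v i)
    (ρ : ℝ)
    (hρ : IsGreatest {x : ℝ | ∃ μ : ℝ, Module.End.HasEigenvalue (Matrix.toLin' ψA) μ ∧ x = |μ|} ρ) :
    |lam| ≤ ρ := by
  obtain rfl : ψA = unfolding A := Matrix.ext hψ
  set w := tensorPow m v
  have hv : ∑ i, v i * v i = 1 := by simpa only [sq] using hunit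
  have hw : w ⬝ᵥ w = 1 := by rw [tensorPow_dotProduct_self, dotProduct, hv, one_pow]
  have hlam : lam = w ⬝ᵥ unfolding A *ᵥ w :=
    calc lam = v ⬝ᵥ tvec A v := by
          simp only [dotProduct, heig, mul_left_comm _ lam, ← Finset.mul_sum, hv, mul_one]
      _ = w ⬝ᵥ unfolding A *ᵥ w := by
          rw [dotProduct_tvec (by omega), sum_mul_prod_eq_tensorPow_dotProduct_unfolding_mulVec]
  have hA : (unfolding A).IsHermitian := isHermitian_iff_isSymm.2 (transpose_unfolding hsym)
  obtain ⟨μ, hμ, hle⟩ := hA.exists_hasEigenvalue_abs_dotProduct_mulVec_le (x := w)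
    (by rintro h; simp [h] at hw)
  calc |lam| ≤ |μ| := by simpa [← hlam, hw] using hle
    _ ≤ ρ := hρ.2 ⟨μ, hμ, rfl⟩
end

section
/- Let k ≥ 3 and let A = Σ_r λ_r v_r^{∘k} be odeco with orthonormal basis {v_r} of ℝ^n and all λ_r ≠ 0. Then the set R = { x ∈ ℝ^n : |⟨v_r, x⟩| < |λ_r|^{-1/(k-2)} for all r } is forward invariant under the map x ↦ A x^{k-1}, and every trajectory starting in R converges to 0. -/
open Finset Filter

/-- The odeco multilinear map `x ↦ A x^{k-1} = ∑_r λ_r ⟨v_r, x⟩^{k-1} v_r`. -/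
noncomputable def odecoMap {n : ℕ} (k : ℕ) (lam : Fin n → ℝ)
    (v : Fin n → EuclideanSpace ℝ (Fin n)) (x : EuclideanSpace ℝ (Fin n)) :
    EuclideanSpace ℝ (Fin n) :=
  ∑ r, (lam r * (inner ℝ (v r) x : ℝ) ^ (k - 1)) • v r

/-!
In the orthonormal coordinates `c_r = ⟨v_r, x⟩` the map decouples into the scalar maps
`c ↦ λ c^{m+1}` with `m = k - 2`. Writing `|λ c^{m+1}| = (|λ| |c|^m) |c|`, the threshold
`|c| < |λ|^{-1/m}` says exactly that the factor `q = |λ| |c|^m` is `< 1`. Then `|c|` can only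
decrease, so `q` stays below its initial value and `|c_t| ≤ q^t |c_0| → 0`.
-/

section Scalar

lemma abs_mul_pow_succ (l c : ℝ) (m : ℕ) : |l * c ^ (m + 1)| = |l| * |c| ^ m * |c| := by
  rw [abs_mul, abs_pow, pow_succ, mul_assoc]

variable {l : ℝ} {m : ℕ}

lemma abs_mul_pow_lt_one_of_abs_lt_rpow (hl : l ≠ 0) (hm : m ≠ 0) {c : ℝ}
    (hc : |c| < |l| ^ (-1 / (m : ℝ))) : |l| * |c| ^ m < 1 := by
  have hl' : 0 < |l| := abs_pos.mpr hl
  have h_threshold : |l| * (|l| ^ (-1 / (m : ℝ))) ^ m = 1 := by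
    rw [← Real.rpow_natCast, ← Real.rpow_mul hl'.le, div_mul_cancel₀ _ (Nat.cast_ne_zero.mpr hm),
      Real.rpow_neg_one, mul_inv_cancel₀ hl'.ne']
  calc |l| * |c| ^ m < |l| * (|l| ^ (-1 / (m : ℝ))) ^ m := by gcongr
    _ = 1 := h_threshold

lemma abs_le_pow_mul_of_recurrence {c : ℕ → ℝ} (hc : ∀ t, c (t + 1) = l * c t ^ (m + 1))
    (hq : |l| * |c 0| ^ m ≤ 1) (t : ℕ) : |c t| ≤ (|l| * |c 0| ^ m) ^ t * |c 0| := by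
  induction t with
  | zero => simp
  | succ t ih =>
    have h_decay : |c t| ≤ |c 0| :=
      ih.trans (mul_le_of_le_one_left (abs_nonneg _) (pow_le_one₀ (by positivity) hq))
    calc |c (t + 1)| = |l| * |c t| ^ m * |c t| := by rw [hc, abs_mul_pow_succ]
      _ ≤ |l| * |c 0| ^ m * ((|l| * |c 0| ^ m) ^ t * |c 0|) := by gcongr
      _ = (|l| * |c 0| ^ m) ^ (t + 1) * |c 0| := by ring

lemma tendsto_zero_of_recurrence {c : ℕ → ℝ} (hc : ∀ t, c (t + 1) = l * c t ^ (m + 1))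
    (hq : |l| * |c 0| ^ m < 1) : Tendsto c atTop (nhds 0) := by
  have h_geom : Tendsto (fun t => (|l| * |c 0| ^ m) ^ t * |c 0|) atTop (nhds 0) := by
    simpa using (tendsto_pow_atTop_nhds_zero_of_lt_one (by positivity) hq).mul_const |c 0|
  exact squeeze_zero_norm (abs_le_pow_mul_of_recurrence hc hq.le) h_geom

end Scalar

section Odeco

variable {n k : ℕ} {lam : Fin n → ℝ} {v : Fin n → EuclideanSpace ℝ (Fin n)}

lemma inner_odecoMap (hv : Orthonormal ℝ v) (x : EuclideanSpace ℝ (Fin n)) (r : Fin n) :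
    inner ℝ (v r) (odecoMap k lam v x) = lam r * inner ℝ (v r) x ^ (k - 1) := by
  simp only [odecoMap, inner_sum, real_inner_smul_right, orthonormal_iff_ite.mp hv, mul_ite,
    mul_one, mul_zero, Finset.sum_ite_eq, Finset.mem_univ, if_true]

lemma tendsto_odecoMap_zero (hk : 2 ≤ k) {x : ℕ → EuclideanSpace ℝ (Fin n)}
    (hx : ∀ r, Tendsto (fun t => inner ℝ (v r) (x t)) atTop (nhds 0)) :
    Tendsto (fun t => odecoMap k lam v (x t)) atTop (nhds 0) := by
  have h_sum := tendsto_finsetSum univ fun r _ =>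
    (((hx r).pow (k - 1)).const_mul (lam r)).smul_const (v r)
  simpa [odecoMap, zero_pow (by omega : k - 1 ≠ 0)] using h_sum

end Odeco

/-- The region `R = {x : |⟨v_r, x⟩| < |λ_r|^{-1/(k-2)} ∀ r}` is forward invariant under
`x ↦ A x^{k-1}`, and every trajectory starting in `R` converges to `0`. -/
theorem stmt12 (n k : ℕ) (hk : 3 ≤ k)
    (lam : Fin n → ℝ) (v : Fin n → EuclideanSpace ℝ (Fin n))
    (hv : Orthonormal ℝ v) (hlam : ∀ r, lam r ≠ 0) :
    (∀ x : EuclideanSpace ℝ (Fin n),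
        (∀ r, |(inner ℝ (v r) x : ℝ)| < |lam r| ^ (-(1 : ℝ) / ((k : ℝ) - 2))) →
        ∀ r, |(inner ℝ (v r) (odecoMap k lam v x) : ℝ)| < |lam r| ^ (-(1 : ℝ) / ((k : ℝ) - 2))) ∧
      (∀ x : ℕ → EuclideanSpace ℝ (Fin n),
        (∀ r, |(inner ℝ (v r) (x 0) : ℝ)| < |lam r| ^ (-(1 : ℝ) / ((k : ℝ) - 2))) →
        (∀ t, x (t + 1) = odecoMap k lam v (x t)) →
        Tendsto x atTop (nhds 0)) := by
  obtain ⟨m, rfl⟩ : ∃ m, k = m + 2 := ⟨k - 2, by omega⟩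
  have hm : m ≠ 0 := by omega
  have hexp : ((m + 2 : ℕ) : ℝ) - 2 = m := by push_cast; ring
  simp only [hexp]
  have h_inner := inner_odecoMap (k := m + 2) (lam := lam) hv
  simp only [show m + 2 - 1 = m + 1 by omega] at h_inner
  refine ⟨fun x hx r => ?_, fun x hx0 hx => ?_⟩
  · calc |inner ℝ (v r) (odecoMap (m + 2) lam v x)|
        = |lam r| * |inner ℝ (v r) x| ^ m * |inner ℝ (v r) x| := by
          rw [h_inner, abs_mul_pow_succ]
      _ ≤ |inner ℝ (v r) x| :=
          mul_le_of_le_one_left (abs_nonneg _)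
            (abs_mul_pow_lt_one_of_abs_lt_rpow (hlam r) hm (hx r)).le
      _ < _ := hx r
  · have h_coord (r : Fin n) : Tendsto (fun t => inner ℝ (v r) (x t)) atTop (nhds 0) :=
      tendsto_zero_of_recurrence (fun t => by rw [hx, h_inner])
        (abs_mul_pow_lt_one_of_abs_lt_rpow (hlam r) hm (hx0 r))
    rw [← tendsto_add_atTop_iff_nat 1]
    simpa only [hx] using tendsto_odecoMap_zero (by omega) h_coord
end

section
/- Let A be a k-th order tensor on ℝ^n with all entries positive, and suppose (λ, v) is a Z-eigenpair with λ equal to the Z-spectral radius attained at a nonnegative unit vector v. Then λ ≤ R, where R = max_j Σ_{j_2,…,j_k} A_{j j_2 … j_k}. -/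
/-!
Let `j` be a coordinate where the nonnegative unit vector `v` is largest, so `0 < v j ≤ 1`.
Bounding every factor of `∏ v (f p)` by `v j` gives `λ v_j = (A v^{k-1})_j ≤ R_j v_j^{k-1}`,
and `v_j^{k-1} ≤ v_j` because `k ≥ 2`; dividing by `v_j` leaves `λ ≤ R_j ≤ R`.
-/

open Finset

lemma tvec_le_rowSum_mul_pow {n k : ℕ} {A : (Fin k → Fin n) → ℝ} {v : Fin n → ℝ} {M : ℝ}
    (hA : ∀ f, 0 ≤ A f) (hv : ∀ i, 0 ≤ v i) (hvM : ∀ i, v i ≤ M) (i : Fin n) :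
    tvec A v i ≤ (∑ f : Fin (k - 1) → Fin n, A (ins i f)) * M ^ (k - 1) := by
  rw [tvec, sum_mul]
  refine sum_le_sum fun f _ => mul_le_mul_of_nonneg_left ?_ (hA _)
  calc ∏ p, v (f p) ≤ ∏ _p : Fin (k - 1), M := prod_le_prod (fun p _ => hv _) fun p _ => hvM _
    _ = M ^ (k - 1) := by rw [prod_const, card_univ, Fintype.card_fin]

lemma le_one_of_sum_sq_eq_one {ι : Type*} [Fintype ι] {v : ι → ℝ} (hv : ∑ i, v i ^ 2 = 1)
    (i : ι) : v i ≤ 1 := by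
  have : v i ^ 2 ≤ 1 := hv ▸ single_le_sum (fun i _ => sq_nonneg (v i)) (mem_univ i)
  exact (le_abs_self _).trans ((sq_le_one_iff_abs_le_one _).mp this)

lemma exists_pos_isMax_of_sum_sq_eq_one {ι : Type*} [Fintype ι] {v : ι → ℝ}
    (hv : ∑ i, v i ^ 2 = 1) (hnn : ∀ i, 0 ≤ v i) : ∃ j, 0 < v j ∧ ∀ i, v i ≤ v j := by
  have hne : (univ : Finset ι).Nonempty := by
    by_contra h
    simp_all [not_nonempty_iff_eq_empty]
  obtain ⟨j, -, hj⟩ := exists_max_image univ v hne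
  refine ⟨j, (hnn j).lt_of_ne fun h0 => ?_, fun i => hj i (mem_univ i)⟩
  have hzero : ∀ i, v i = 0 := fun i => le_antisymm (h0 ▸ hj i (mem_univ i)) (hnn i)
  simp [hzero] at hv

/-- For a positive tensor, a Z-eigenvalue attained at a nonnegative unit vector is bounded
by `R = max_j ∑_{j_2,…,j_k} A_{j j_2 … j_k}`. -/
theorem stmt16 (n k : ℕ) (hk : 2 ≤ k) (A : (Fin k → Fin n) → ℝ)
    (hpos : ∀ f, 0 < A f)
    (lam : ℝ) (v : Fin n → ℝ) (hunit : ∑ i, v i ^ 2 = 1) (hvnn : ∀ i, 0 ≤ v i)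
    (heig : ∀ i, tvec A v i = lam * v i)
    (R : ℝ)
    (hR : IsGreatest (Set.range fun j : Fin n => ∑ f : Fin (k - 1) → Fin n, A (ins j f)) R) :
    lam ≤ R := by
  obtain ⟨j, hvj, hjmax⟩ := exists_pos_isMax_of_sum_sq_eq_one hunit hvnn
  set Rj := ∑ f : Fin (k - 1) → Fin n, A (ins j f)
  have hRj : 0 ≤ Rj := sum_nonneg fun f _ => (hpos _).le
  have hbound : lam * v j ≤ Rj * v j :=
    calc lam * v j = tvec A v j := (heig j).symm
      _ ≤ Rj * v j ^ (k - 1) := tvec_le_rowSum_mul_pow (fun f => (hpos f).le) hvnn hjmax j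
      _ ≤ Rj * v j := mul_le_mul_of_nonneg_left
          (pow_le_of_le_one (hvnn j) (le_one_of_sum_sq_eq_one hunit j) (by omega)) hRj
  exact (le_of_mul_le_mul_right hbound hvj).trans (hR.2 ⟨j, rfl⟩)
end
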